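/- If !L* derives !B, Π → A, where B ⊆ G_R for a finite set R of Buszkowski rules, and Π, A contain neither ! nor \, then L* + R derives Π → A. -/

import Mathlib

/-
Consider `!L*` derivations whose antecedent formulas are all either `!`-free or of the form `!G`
with `G ∈ G_R`; this invariant passes from the conclusion of every rule to its premises. Erase the
banged formulas. Each `G ∈ G_R` is derivable from the empty antecedent in `L* + R` (one Buszkowski
rule under `/`-right introductions), so after erasure the structural rules of `!` become trivial,
dereliction `!G → G` is undone by a cut against `→ G`, the Lambek rules carry over verbatim, and
`(→!)` cannot occur because the succedent stays `!`-free. Cut is admissible in `L* + R` by the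
usual argument: the Buszkowski rules have atomic conclusions, so an atom is never principal on
the left and cuts on atoms only need to be permuted upwards.
-/

/-- Formulae (types) of the Lambek calculus with a modality:
`var` = primitive type, `div B A` = B / A, `ldiv A B` = A \ B, `bang A` = !A. -/
inductive Fm : Type
  | var : ℕ → Fm
  | div : Fm → Fm → Fm
  | ldiv : Fm → Fm → Fm
  | bang : Fm → Fm
  deriving DecidableEq

open Fm

/-- A Buszkowski rule: either (B₁) "from Φ₁ → p and Φ₂ → q derive Φ₁, Φ₂ → r"
or (B₂) "from Φ, q → p derive Φ → r", for fixed variables p, q, r. -/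
inductive BRule : Type
  | b1 (p q r : ℕ)
  | b2 (p q r : ℕ)
  deriving DecidableEq

/-- L* + R: the Lambek calculus L* (empty antecedents allowed) extended with
a finite set R of Buszkowski rules. -/
inductive LStarR (R : Finset BRule) : List Fm → Fm → Prop
  | ax (A : Fm) : LStarR R [A] A
  | divL (Γ Δ₁ Δ₂ : List Fm) (A B C : Fm) :
      LStarR R Γ A → LStarR R (Δ₁ ++ B :: Δ₂) C →
      LStarR R (Δ₁ ++ div B A :: (Γ ++ Δ₂)) C
  | divR (Γ : List Fm) (A B : Fm) :
      LStarR R (Γ ++ [A]) B → LStarR R Γ (div B A)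
  | ldivL (Γ Δ₁ Δ₂ : List Fm) (A B C : Fm) :
      LStarR R Γ A → LStarR R (Δ₁ ++ B :: Δ₂) C →
      LStarR R (Δ₁ ++ Γ ++ ldiv A B :: Δ₂) C
  | ldivR (Γ : List Fm) (A B : Fm) :
      LStarR R (A :: Γ) B → LStarR R Γ (ldiv A B)
  | b1 (p q r : ℕ) (Φ₁ Φ₂ : List Fm) :
      BRule.b1 p q r ∈ R → LStarR R Φ₁ (var p) → LStarR R Φ₂ (var q) →
      LStarR R (Φ₁ ++ Φ₂) (var r)
  | b2 (p q r : ℕ) (Φ : List Fm) :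
      BRule.b2 p q r ∈ R → LStarR R (Φ ++ [var q]) (var p) →
      LStarR R Φ (var r)

/-- The calculus !L*: the Lambek calculus L* (with empty antecedents allowed)
extended with a relevant modality `!` with rules (!→), (→!), (perm₁), (perm₂), (contr). -/
inductive BangL : List Fm → Fm → Prop
  | ax (A : Fm) : BangL [A] A
  | divL (Γ Δ₁ Δ₂ : List Fm) (A B C : Fm) :
      BangL Γ A → BangL (Δ₁ ++ B :: Δ₂) C →
      BangL (Δ₁ ++ div B A :: (Γ ++ Δ₂)) C
  | divR (Γ : List Fm) (A B : Fm) :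
      BangL (Γ ++ [A]) B → BangL Γ (div B A)
  | ldivL (Γ Δ₁ Δ₂ : List Fm) (A B C : Fm) :
      BangL Γ A → BangL (Δ₁ ++ B :: Δ₂) C →
      BangL (Δ₁ ++ Γ ++ ldiv A B :: Δ₂) C
  | ldivR (Γ : List Fm) (A B : Fm) :
      BangL (A :: Γ) B → BangL Γ (ldiv A B)
  | bangL (Γ₁ Γ₂ : List Fm) (A C : Fm) :
      BangL (Γ₁ ++ A :: Γ₂) C → BangL (Γ₁ ++ bang A :: Γ₂) C
  | bangR (Γ : List Fm) (B : Fm) :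
      BangL (Γ.map bang) B → BangL (Γ.map bang) (bang B)
  | perm1 (Δ₁ Γ Δ₂ : List Fm) (A C : Fm) :
      BangL (Δ₁ ++ bang A :: (Γ ++ Δ₂)) C → BangL (Δ₁ ++ Γ ++ bang A :: Δ₂) C
  | perm2 (Δ₁ Γ Δ₂ : List Fm) (A C : Fm) :
      BangL (Δ₁ ++ Γ ++ bang A :: Δ₂) C → BangL (Δ₁ ++ bang A :: (Γ ++ Δ₂)) C
  | contr (Δ₁ Δ₂ : List Fm) (A C : Fm) :
      BangL (Δ₁ ++ bang A :: bang A :: Δ₂) C → BangL (Δ₁ ++ bang A :: Δ₂) C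

/-- G_R: the formula (r/q)/p for each (B₁)-rule and r/(p/q) for each (B₂)-rule of R. -/
def GRset (R : Finset BRule) : Set Fm :=
  {F | ∃ p q r : ℕ,
    (BRule.b1 p q r ∈ R ∧ F = div (div (var r) (var q)) (var p)) ∨
    (BRule.b2 p q r ∈ R ∧ F = div (var r) (div (var p) (var q)))}

/-- A formula contains no occurrence of `!`. -/
def bangFree : Fm → Prop
  | var _ => True
  | div a b => bangFree a ∧ bangFree b
  | ldiv a b => bangFree a ∧ bangFree b
  | bang _ => False

/-- A formula contains no occurrence of `\` (left division). -/
def ldivFree : Fm → Prop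
  | var _ => True
  | div a b => ldivFree a ∧ ldivFree b
  | ldiv _ _ => False
  | bang a => ldivFree a

theorem List.append_eq_append_cons {α : Type*} {l₁ l₂ Δ₁ Δ₂ : List α} {E : α}
    (h : l₁ ++ l₂ = Δ₁ ++ E :: Δ₂) :
    (∃ t, l₁ = Δ₁ ++ E :: t ∧ Δ₂ = t ++ l₂) ∨ (∃ s, Δ₁ = l₁ ++ s ∧ l₂ = s ++ E :: Δ₂) := by
  rcases List.append_eq_append_iff.mp h with ⟨s, hΔ₁, hl₂⟩ | ⟨t, hl₁, ht⟩
  · exact Or.inr ⟨s, hΔ₁, hl₂⟩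
  · rcases List.cons_eq_append_iff.mp ht with ⟨rfl, hl₂⟩ | ⟨t', rfl, hΔ₂⟩
    · exact Or.inr ⟨[], by simpa using hl₁.symm, hl₂⟩
    · exact Or.inl ⟨t', hl₁, hΔ₂⟩

theorem List.append_cons_eq_append_cons {α : Type*} {l₁ l₂ Δ₁ Δ₂ : List α} {x E : α}
    (h : l₁ ++ x :: l₂ = Δ₁ ++ E :: Δ₂) :
    (∃ t, l₁ = Δ₁ ++ E :: t ∧ Δ₂ = t ++ x :: l₂) ∨ (l₁ = Δ₁ ∧ x = E ∧ l₂ = Δ₂) ∨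
      (∃ s, Δ₁ = l₁ ++ x :: s ∧ l₂ = s ++ E :: Δ₂) := by
  rcases List.append_eq_append_cons h with h | ⟨s, rfl, hs⟩
  · exact Or.inl h
  · rcases List.cons_eq_append_iff.mp hs with ⟨rfl, hl₂⟩ | ⟨s', rfl, hl₂⟩
    · simp only [List.cons.injEq] at hl₂
      exact Or.inr (Or.inl ⟨by simp, hl₂.1.symm, hl₂.2.symm⟩)
    · exact Or.inr (Or.inr ⟨s', rfl, hl₂⟩)

def Fm.isBang : Fm → Bool
  | var _ => false
  | div _ _ => false
  | ldiv _ _ => false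
  | bang _ => true

@[simp]
theorem Fm.isBang_bang (A : Fm) : (bang A).isBang = true := rfl

theorem Fm.isBang_eq_false_of_bangFree {F : Fm} (h : bangFree F) : F.isBang = false := by
  cases F <;> first | rfl | exact h.elim

section

variable {R : Finset BRule}

namespace LStarR

theorem cut_of_principal {E : Fm} {Ξ : List Fm} (hΞ : LStarR R Ξ E)
    (hdiv : ∀ {B A Γ Θ₁ Θ₂ C}, E = div B A → LStarR R Γ A → LStarR R (Θ₁ ++ B :: Θ₂) C →
      LStarR R (Θ₁ ++ Ξ ++ Γ ++ Θ₂) C)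
    (hldiv : ∀ {A B Γ Θ₁ Θ₂ C}, E = ldiv A B → LStarR R Γ A → LStarR R (Θ₁ ++ B :: Θ₂) C →
      LStarR R (Θ₁ ++ Γ ++ Ξ ++ Θ₂) C)
    {Γ : List Fm} {C : Fm} (d : LStarR R Γ C) {Δ₁ Δ₂ : List Fm} (hΓ : Γ = Δ₁ ++ E :: Δ₂) :
    LStarR R (Δ₁ ++ Ξ ++ Δ₂) C := by
  induction d generalizing Δ₁ Δ₂ with
  | ax A =>
    obtain ⟨rfl, rfl, rfl⟩ : Δ₁ = [] ∧ A = E ∧ Δ₂ = [] := by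
      rcases Δ₁ with _ | ⟨_, _ | _⟩ <;> simp_all
    simpa using hΞ
  | divL Γ Θ₁ Θ₂ A B C h₁ h₂ ih₁ ih₂ =>
    rcases List.append_cons_eq_append_cons hΓ with ⟨t, rfl, rfl⟩ | ⟨rfl, rfl, rfl⟩ | ⟨s, rfl, hs⟩
    · simpa using divL Γ (Δ₁ ++ Ξ ++ t) Θ₂ A B C h₁
        (by simpa using ih₂ (Δ₂ := t ++ B :: Θ₂) (by simp))
    · simpa using hdiv rfl h₁ h₂
    · rcases List.append_eq_append_cons hs with ⟨u, rfl, rfl⟩ | ⟨u, rfl, rfl⟩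
      · simpa using divL (s ++ Ξ ++ u) Θ₁ Θ₂ A B C (ih₁ rfl) h₂
      · simpa using divL Γ Θ₁ (u ++ Ξ ++ Δ₂) A B C h₁
          (by simpa using ih₂ (Δ₁ := Θ₁ ++ B :: u) (by simp))
  | divR Γ A B _ ih =>
    exact divR _ A B (by simpa using ih (Δ₂ := Δ₂ ++ [A]) (by simp [hΓ]))
  | ldivL Γ Θ₁ Θ₂ A B C h₁ h₂ ih₁ ih₂ =>
    rcases List.append_cons_eq_append_cons hΓ with ⟨t, ht, rfl⟩ | ⟨hΘΓ, rfl, rfl⟩ | ⟨s, rfl, rfl⟩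
    · rcases List.append_eq_append_cons ht with ⟨u, rfl, rfl⟩ | ⟨u, rfl, rfl⟩
      · simpa using ldivL Γ (Δ₁ ++ Ξ ++ u) Θ₂ A B C h₁
          (by simpa using ih₂ (Δ₂ := u ++ B :: Θ₂) (by simp))
      · simpa using ldivL (u ++ Ξ ++ t) Θ₁ Θ₂ A B C (ih₁ rfl) h₂
    · simpa [← hΘΓ] using hldiv rfl h₁ h₂
    · simpa using ldivL Γ Θ₁ (s ++ Ξ ++ Δ₂) A B C h₁
        (by simpa using ih₂ (Δ₁ := Θ₁ ++ B :: s) (by simp))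
  | ldivR Γ A B _ ih =>
    exact ldivR _ A B (by simpa using ih (Δ₁ := A :: Δ₁) (by simp [hΓ]))
  | b1 p q r Φ₁ Φ₂ hR h₁ h₂ ih₁ ih₂ =>
    rcases List.append_eq_append_cons hΓ with ⟨t, rfl, rfl⟩ | ⟨s, rfl, rfl⟩
    · simpa using b1 p q r _ Φ₂ hR (ih₁ rfl) h₂
    · simpa using b1 p q r Φ₁ _ hR h₁ (ih₂ rfl)
  | b2 p q r Φ hR _ ih =>
    exact b2 p q r _ hR (by simpa using ih (Δ₂ := Δ₂ ++ [var q]) (by simp [hΓ]))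

def CutAdmissible (R : Finset BRule) (E : Fm) : Prop :=
  ∀ ⦃Ξ Δ₁ Δ₂ : List Fm⦄ ⦃C : Fm⦄, LStarR R Ξ E → LStarR R (Δ₁ ++ E :: Δ₂) C →
    LStarR R (Δ₁ ++ Ξ ++ Δ₂) C

theorem cut_div {A B : Fm} (hA : CutAdmissible R A) (hB : CutAdmissible R B) {Ξ Γ Θ₁ Θ₂ : List Fm}
    {C : Fm} (hΞ : LStarR R Ξ (div B A)) (hΓ : LStarR R Γ A) (hC : LStarR R (Θ₁ ++ B :: Θ₂) C) :
    LStarR R (Θ₁ ++ Ξ ++ Γ ++ Θ₂) C := by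
  generalize hE : div B A = E at hΞ
  induction hΞ generalizing Θ₁ Θ₂ C with
  | ax => subst hE; simpa using divL Γ Θ₁ Θ₂ A B C hΓ hC
  | divL Γ' Δ₁ Δ₂ A' B' _ h₁ _ _ ih =>
    simpa using divL Γ' (Θ₁ ++ Δ₁) (Δ₂ ++ Γ ++ Θ₂) A' B' C h₁ (by simpa using ih hC hE)
  | ldivL Γ' Δ₁ Δ₂ A' B' _ h₁ _ _ ih =>
    simpa using ldivL Γ' (Θ₁ ++ Δ₁) (Δ₂ ++ Γ ++ Θ₂) A' B' C h₁ (by simpa using ih hC hE)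
  | divR Ξ A' B' h =>
    obtain ⟨rfl, rfl⟩ : B = B' ∧ A = A' := by injection hE; simp_all
    have hΞΓ : LStarR R (Ξ ++ Γ) B := by simpa using hA hΓ (Δ₁ := Ξ) (Δ₂ := []) h
    simpa using hB hΞΓ hC
  | ldivR | b1 | b2 => cases hE

theorem cut_ldiv {A B : Fm} (hA : CutAdmissible R A) (hB : CutAdmissible R B)
    {Ξ Γ Θ₁ Θ₂ : List Fm} {C : Fm} (hΞ : LStarR R Ξ (ldiv A B)) (hΓ : LStarR R Γ A)
    (hC : LStarR R (Θ₁ ++ B :: Θ₂) C) : LStarR R (Θ₁ ++ Γ ++ Ξ ++ Θ₂) C := by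
  generalize hE : ldiv A B = E at hΞ
  induction hΞ generalizing Θ₁ Θ₂ C with
  | ax => subst hE; simpa using ldivL Γ Θ₁ Θ₂ A B C hΓ hC
  | divL Γ' Δ₁ Δ₂ A' B' _ h₁ _ _ ih =>
    simpa using divL Γ' (Θ₁ ++ Γ ++ Δ₁) (Δ₂ ++ Θ₂) A' B' C h₁ (by simpa using ih hC hE)
  | ldivL Γ' Δ₁ Δ₂ A' B' _ h₁ _ _ ih =>
    simpa using ldivL Γ' (Θ₁ ++ Γ ++ Δ₁) (Δ₂ ++ Θ₂) A' B' C h₁ (by simpa using ih hC hE)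
  | ldivR Ξ A' B' h =>
    obtain ⟨rfl, rfl⟩ : A = A' ∧ B = B' := by injection hE; simp_all
    have hΓΞ : LStarR R (Γ ++ Ξ) B := by simpa using hA hΓ (Δ₁ := []) (Δ₂ := Ξ) h
    simpa using hB hΓΞ hC
  | divR | b1 | b2 => cases hE

theorem cutAdmissible (E : Fm) : CutAdmissible R E := by
  induction E with
  | div B A ihB ihA =>
    intro Ξ Δ₁ Δ₂ C hΞ hC
    refine cut_of_principal hΞ ?_ (fun h => by cases h) hC rfl
    rintro B' A' Γ Θ₁ Θ₂ C' ⟨⟩ hΓ hC'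
    exact cut_div ihA ihB hΞ hΓ hC'
  | ldiv A B ihA ihB =>
    intro Ξ Δ₁ Δ₂ C hΞ hC
    refine cut_of_principal hΞ (fun h => by cases h) ?_ hC rfl
    rintro A' B' Γ Θ₁ Θ₂ C' ⟨⟩ hΓ hC'
    exact cut_ldiv ihA ihB hΞ hΓ hC'
  | var | bang =>
    intro Ξ Δ₁ Δ₂ C hΞ hC
    exact cut_of_principal hΞ (fun h => by cases h) (fun h => by cases h) hC rfl

theorem cut {E : Fm} {Ξ Δ₁ Δ₂ : List Fm} {C : Fm} (hΞ : LStarR R Ξ E)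
    (hC : LStarR R (Δ₁ ++ E :: Δ₂) C) : LStarR R (Δ₁ ++ Ξ ++ Δ₂) C :=
  cutAdmissible E hΞ hC

theorem nil_of_mem_GRset {G : Fm} (h : G ∈ GRset R) : LStarR R [] G := by
  obtain ⟨p, q, r, ⟨hR, rfl⟩ | ⟨hR, rfl⟩⟩ := h
  · refine divR [] (var p) _ (divR [var p] (var q) (var r) ?_)
    exact b1 p q r [var p] [var q] hR (ax _) (ax _)
  · refine divR [] (div (var p) (var q)) (var r) (b2 p q r _ hR ?_)
    exact divL [var q] [] [] (var q) (var p) (var p) (ax _) (ax _)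

end LStarR

theorem bangFree_of_mem_GRset {G : Fm} (h : G ∈ GRset R) : bangFree G := by
  obtain ⟨p, q, r, ⟨-, rfl⟩ | ⟨-, rfl⟩⟩ := h <;> simp [bangFree]

def BangFreeOrBangGR (R : Finset BRule) (F : Fm) : Prop :=
  bangFree F ∨ ∃ G ∈ GRset R, F = bang G

theorem bangFree_of_bangFreeOrBangGR {F : Fm} (h : BangFreeOrBangGR R F) (hF : F.isBang = false) :
    bangFree F := by
  rcases h with h | ⟨G, -, rfl⟩
  exacts [h, by simp [Fm.isBang] at hF]

theorem BangL.toLStarR {Γ : List Fm} {C : Fm} (h : BangL Γ C)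
    (hΓ : ∀ F ∈ Γ, BangFreeOrBangGR R F) (hC : bangFree C) :
    LStarR R (Γ.filter fun F => !F.isBang) C := by
  induction h with
  | ax A => simpa [Fm.isBang_eq_false_of_bangFree hC] using LStarR.ax A
  | divL Γ Δ₁ Δ₂ A B C _ _ ih₁ ih₂ =>
    simp only [List.forall_mem_append, List.forall_mem_cons] at hΓ
    obtain ⟨hΔ₁, hprin, hΓ, hΔ₂⟩ := hΓ
    have hBA := bangFree_of_bangFreeOrBangGR hprin rfl
    have d₁ := ih₁ hΓ hBA.2
    have d₂ := ih₂ (List.forall_mem_append.2 ⟨hΔ₁, List.forall_mem_cons.2 ⟨Or.inl hBA.1, hΔ₂⟩⟩) hC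
    simpa [Fm.isBang_eq_false_of_bangFree hBA] using
      LStarR.divL _ _ _ A B C d₁ (by simpa [Fm.isBang_eq_false_of_bangFree hBA.1] using d₂)
  | divR Γ A B _ ih =>
    have d := ih (List.forall_mem_append.2 ⟨hΓ, List.forall_mem_singleton.2 (Or.inl hC.2)⟩) hC.1
    exact LStarR.divR _ A B (by simpa [Fm.isBang_eq_false_of_bangFree hC.2] using d)
  | ldivL Γ Δ₁ Δ₂ A B C _ _ ih₁ ih₂ =>
    simp only [List.forall_mem_append, List.forall_mem_cons] at hΓ
    obtain ⟨⟨hΔ₁, hΓ⟩, hprin, hΔ₂⟩ := hΓ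
    have hAB := bangFree_of_bangFreeOrBangGR hprin rfl
    have d₁ := ih₁ hΓ hAB.1
    have d₂ := ih₂ (List.forall_mem_append.2 ⟨hΔ₁, List.forall_mem_cons.2 ⟨Or.inl hAB.2, hΔ₂⟩⟩) hC
    simpa [Fm.isBang_eq_false_of_bangFree hAB] using
      LStarR.ldivL _ _ _ A B C d₁ (by simpa [Fm.isBang_eq_false_of_bangFree hAB.2] using d₂)
  | ldivR Γ A B _ ih =>
    have d := ih (List.forall_mem_cons.2 ⟨Or.inl hC.1, hΓ⟩) hC.2
    exact LStarR.ldivR _ A B (by simpa [Fm.isBang_eq_false_of_bangFree hC.1] using d)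
  | bangL Γ₁ Γ₂ A C _ ih =>
    simp only [List.forall_mem_append, List.forall_mem_cons] at hΓ
    obtain ⟨hΓ₁, ⟨⟨⟩⟩ | ⟨G, hG, ⟨⟩⟩, hΓ₂⟩ := hΓ
    have hA := bangFree_of_mem_GRset hG
    have d := ih (List.forall_mem_append.2 ⟨hΓ₁, List.forall_mem_cons.2 ⟨Or.inl hA, hΓ₂⟩⟩) hC
    simpa using LStarR.cut (LStarR.nil_of_mem_GRset hG)
      (by simpa [Fm.isBang_eq_false_of_bangFree hA] using d)
  | bangR => exact hC.elim
  | perm1 Δ₁ Γ Δ₂ A C _ ih | perm2 Δ₁ Γ Δ₂ A C _ ih | contr Δ₁ Δ₂ A C _ ih =>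
    have d := ih (fun F hF => hΓ F (by simp only [List.mem_append, List.mem_cons] at hF ⊢; tauto))
    simpa using d hC

end

theorem stmt9 (R : Finset BRule) (B : Finset Fm) (hB : ↑B ⊆ GRset R)
    (Φ : List Fm) (A : Fm)
    (hΦ : ∀ F ∈ Φ, bangFree F ∧ ldivFree F) (hA : bangFree A ∧ ldivFree A)
    (h : BangL (B.toList.map bang ++ Φ) A) : LStarR R Φ A := by
  have hΓ : ∀ F ∈ B.toList.map bang ++ Φ, BangFreeOrBangGR R F := by
    simp only [List.forall_mem_append, List.forall_mem_map, Finset.mem_toList]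
    exact ⟨fun G hG => Or.inr ⟨G, hB hG, rfl⟩, fun F hF => Or.inl (hΦ F hF).1⟩
  have hErase : (B.toList.map bang ++ Φ).filter (fun F => !F.isBang) = Φ := by
    rw [List.filter_append, List.filter_eq_nil_iff.2 (by simp), List.filter_eq_self.2]
    · rfl
    · simpa using fun F hF => Fm.isBang_eq_false_of_bangFree (hΦ F hF).1
  simpa [hErase] using h.toLStarR hΓ hA.1
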